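/- With T and π as above, the operators T, X, Y = πT on ℝ[X^{±1}] satisfy TXT = X^{-1} and TY^{-1}T = Y. -/

import Mathlib

open LaurentPolynomial

/-- The linear operator on `ℝ[X^{±1}]` defined by its values on the monomial basis. -/
noncomputable def onBasis (g : ℤ → LaurentPolynomial ℝ) :
    LaurentPolynomial ℝ →ₗ[ℝ] LaurentPolynomial ℝ :=
  Finsupp.lsum ℝ (fun n => LinearMap.toSpanSingleton ℝ (LaurentPolynomial ℝ) (g n)) ∘ₗ
    (AddMonoidAlgebra.coeffLinearEquiv ℝ).toLinearMap

/-- `(X^{-n} - X^n)/(X² - 1)` as a Laurent polynomial. -/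
noncomputable def divDiff (n : ℤ) : LaurentPolynomial ℝ :=
  if 0 ≤ n then -∑ i ∈ Finset.range n.toNat, T (2 * (i : ℤ) - n)
  else ∑ i ∈ Finset.range (-n).toNat, T (n + 2 * (i : ℤ))

/-- The Demazure–Lusztig operator `T = u·s + (u - u⁻¹)/(X²-1)·(s - 1)`, `u = t^{1/2}`. -/
noncomputable def DLTop (u : ℝ) : LaurentPolynomial ℝ →ₗ[ℝ] LaurentPolynomial ℝ :=
  onBasis fun n => u • T (-n) + (u - u⁻¹) • divDiff n

/-- `π : f(X) ↦ f(q^{1/2} X^{-1})`, with `v = q^{1/2}`. -/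
noncomputable def piop (v : ℝ) : LaurentPolynomial ℝ →ₗ[ℝ] LaurentPolynomial ℝ :=
  onBasis fun n => (v ^ n) • T (-n)

/-- Multiplication by `X`. -/
noncomputable def Xop : LaurentPolynomial ℝ →ₗ[ℝ] LaurentPolynomial ℝ :=
  onBasis fun n => T (n + 1)

/-- Multiplication by `X⁻¹`. -/
noncomputable def Xinvop : LaurentPolynomial ℝ →ₗ[ℝ] LaurentPolynomial ℝ :=
  onBasis fun n => T (n - 1)

/-- `Y = π T`. -/
noncomputable def Yop (u v : ℝ) : LaurentPolynomial ℝ →ₗ[ℝ] LaurentPolynomial ℝ :=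
  piop v ∘ₗ DLTop u

/-- `Y⁻¹ = T⁻¹ π⁻¹ = (T - (u - u⁻¹)) π`, using the Hecke relation and `π² = 1`. -/
noncomputable def Yinvop (u v : ℝ) : LaurentPolynomial ℝ →ₗ[ℝ] LaurentPolynomial ℝ :=
  (DLTop u - (u - u⁻¹) • LinearMap.id) ∘ₗ piop v

/-! Write `T = u s + (u - u⁻¹) D` with `s f = f(X⁻¹)` and `D` the divided difference, characterised
by `(X² - 1) D f = s f - f`. As `X² - 1` is not a zero divisor, this identity yields `D s = -D`,
`s D = X² D`, `D² = D` and `D (X f) = X⁻¹ (D f - f)`, whence the Hecke relation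
`T² = (u - u⁻¹) T + 1` and `T X = X⁻¹ (T - (u - u⁻¹))`. The latter gives `TXT = X⁻¹`; the former,
with `π² = 1`, gives `Y⁻¹ Y = 1` and `T Y⁻¹ T = (T² - (u - u⁻¹) T) π T = π T = Y`. -/

lemma onBasis_T (g : ℤ → LaurentPolynomial ℝ) (n : ℤ) : onBasis g (T n) = g n := by
  change Finsupp.lsum ℝ _ (Finsupp.single n 1) = _
  simp

lemma linearMap_ext_T {f g : LaurentPolynomial ℝ →ₗ[ℝ] LaurentPolynomial ℝ}
    (h : ∀ n, f (T n) = g (T n)) : f = g := by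
  refine AddMonoidAlgebra.lhom_ext' fun n => LinearMap.ext fun a => ?_
  have : (AddMonoidAlgebra.single n a : LaurentPolynomial ℝ) = a • T n := by
    rw [T, AddMonoidAlgebra.smul_single, smul_eq_mul, mul_one]
  simp only [LinearMap.comp_apply, AddMonoidAlgebra.lsingle_apply]
  rw [this, map_smul, map_smul, h]

lemma T_two_sub_one_ne_zero : (T 2 - 1 : LaurentPolynomial ℝ) ≠ 0 := by
  rw [sub_ne_zero, ← T_zero]
  intro h
  have h2 := congrArg (fun p : LaurentPolynomial ℝ => p.coeff 2) h
  simp only [T_apply] at h2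
  norm_num at h2

lemma T_two_sub_one_mul_sum_range (m : ℤ) (k : ℕ) :
    (T 2 - 1 : LaurentPolynomial ℝ) * ∑ i ∈ Finset.range k, T (m + 2 * (i : ℤ)) =
      T (m + 2 * k) - T m := by
  have step (i : ℕ) : (T 2 - 1 : LaurentPolynomial ℝ) * T (m + 2 * (i : ℤ)) =
      T (m + 2 * ((i + 1 : ℕ) : ℤ)) - T (m + 2 * (i : ℤ)) := by
    rw [sub_mul, one_mul, ← T_add]
    push_cast
    ring_nf
  rw [Finset.mul_sum, Finset.sum_congr rfl fun i _ => step i,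
    Finset.sum_range_sub (fun i : ℕ => (T (m + 2 * (i : ℤ)) : LaurentPolynomial ℝ))]
  simp

lemma T_two_sub_one_mul_divDiff (n : ℤ) :
    (T 2 - 1 : LaurentPolynomial ℝ) * divDiff n = T (-n) - T n := by
  unfold divDiff
  split_ifs with h
  · have := T_two_sub_one_mul_sum_range (-n) n.toNat
    simp only [Int.toNat_of_nonneg h, show -n + 2 * n = n by ring] at this
    simp only [mul_neg, show ∀ i : ℤ, 2 * i - n = -n + 2 * i from fun i => by ring, this, neg_sub]
  · have := T_two_sub_one_mul_sum_range n (-n).toNat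
    rwa [Int.toNat_of_nonneg (by omega), show n + 2 * -n = -n by ring] at this

noncomputable def demazure : LaurentPolynomial ℝ →ₗ[ℝ] LaurentPolynomial ℝ :=
  onBasis divDiff

lemma T_two_sub_one_mul_demazure (f : LaurentPolynomial ℝ) :
    (T 2 - 1) * demazure f = invert f - f := by
  have : LinearMap.mulLeft ℝ (T 2 - 1) ∘ₗ demazure =
      invert.toLinearMap - LinearMap.id := by
    refine linearMap_ext_T fun n => ?_
    simp [demazure, onBasis_T, T_two_sub_one_mul_divDiff]
  exact LinearMap.congr_fun this f

section demazure

variable (f : LaurentPolynomial ℝ)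

lemma demazure_invert : demazure (invert f) = -demazure f := by
  refine mul_left_cancel₀ T_two_sub_one_ne_zero ?_
  rw [T_two_sub_one_mul_demazure, mul_neg, T_two_sub_one_mul_demazure,
    involutive_invert, neg_sub]

lemma invert_demazure : invert (demazure f) = T 2 * demazure f := by
  refine mul_left_cancel₀ T_two_sub_one_ne_zero ?_
  have h := congrArg invert (T_two_sub_one_mul_demazure f)
  rw [map_mul, map_sub, map_sub, invert_T, map_one, involutive_invert] at h
  have hT : (T 2 * T (-2) : LaurentPolynomial ℝ) = 1 := by rw [← T_add]; simp
  linear_combination (-T 2) * h + invert (demazure f) * hT -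
    T 2 * T_two_sub_one_mul_demazure f

lemma demazure_demazure : demazure (demazure f) = demazure f := by
  refine mul_left_cancel₀ T_two_sub_one_ne_zero ?_
  rw [T_two_sub_one_mul_demazure, invert_demazure]
  ring

lemma demazure_T_one_mul : demazure (T 1 * f) = T (-1) * (demazure f - f) := by
  refine mul_left_cancel₀ T_two_sub_one_ne_zero ?_
  have hT : (T (-1) * T 2 : LaurentPolynomial ℝ) = T 1 := by rw [← T_add]; norm_num
  rw [T_two_sub_one_mul_demazure, map_mul, invert_T]
  linear_combination (-T (-1)) * T_two_sub_one_mul_demazure f + f * hT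

end demazure

lemma DLTop_apply (u : ℝ) (f : LaurentPolynomial ℝ) :
    DLTop u f = u • invert f + (u - u⁻¹) • demazure f := by
  have : DLTop u = u • invert.toLinearMap + (u - u⁻¹) • demazure := by
    refine linearMap_ext_T fun n => ?_
    simp [DLTop, demazure, onBasis_T]
  rw [this]
  rfl

lemma DLTop_DLTop {u : ℝ} (hu : u ≠ 0) (f : LaurentPolynomial ℝ) :
    DLTop u (DLTop u f) = (u - u⁻¹) • DLTop u f + f := by
  have hT : T 2 * demazure f = demazure f + (invert f - f) := by
    linear_combination T_two_sub_one_mul_demazure f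
  simp only [DLTop_apply, map_add, map_smul, involutive_invert f, invert_demazure, hT,
    demazure_invert, demazure_demazure]
  match_scalars <;> field_simp <;> ring

lemma DLTop_T_one_mul (u : ℝ) (f : LaurentPolynomial ℝ) :
    DLTop u (T 1 * f) = T (-1) * (DLTop u f - (u - u⁻¹) • f) := by
  rw [DLTop_apply, DLTop_apply, map_mul, invert_T, demazure_T_one_mul]
  simp only [mul_add, mul_sub, mul_smul_comm]
  module

lemma Xop_apply (f : LaurentPolynomial ℝ) : Xop f = T 1 * f := by
  have : Xop = LinearMap.mulLeft ℝ (T 1) := by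
    refine linearMap_ext_T fun n => ?_
    rw [LinearMap.mulLeft_apply, Xop, onBasis_T, ← T_add, add_comm]
  rw [this, LinearMap.mulLeft_apply]

lemma Xinvop_apply (f : LaurentPolynomial ℝ) : Xinvop f = T (-1) * f := by
  have : Xinvop = LinearMap.mulLeft ℝ (T (-1)) := by
    refine linearMap_ext_T fun n => ?_
    rw [LinearMap.mulLeft_apply, Xinvop, onBasis_T, ← T_add, sub_eq_neg_add]
  rw [this, LinearMap.mulLeft_apply]

lemma piop_piop (v : ℝ) (hv : v ≠ 0) (f : LaurentPolynomial ℝ) : piop v (piop v f) = f := by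
  have : piop v ∘ₗ piop v = LinearMap.id := by
    refine linearMap_ext_T fun n => ?_
    simp only [LinearMap.comp_apply, piop, onBasis_T, map_smul, smul_smul, neg_neg,
      LinearMap.id_apply]
    rw [← zpow_add₀ hv]
    simp
  exact LinearMap.congr_fun this f

lemma DLTop_comp_Xop_comp_DLTop {u : ℝ} (hu : u ≠ 0) :
    DLTop u ∘ₗ Xop ∘ₗ DLTop u = Xinvop :=
  LinearMap.ext fun f => by
    simp only [LinearMap.comp_apply, Xop_apply, DLTop_T_one_mul, DLTop_DLTop hu,
      add_sub_cancel_left, Xinvop_apply]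

lemma Yinvop_comp_Yop {u v : ℝ} (hu : u ≠ 0) (hv : v ≠ 0) :
    Yinvop u v ∘ₗ Yop u v = LinearMap.id :=
  LinearMap.ext fun f => by
    simp only [Yinvop, Yop, LinearMap.comp_apply, LinearMap.sub_apply, LinearMap.smul_apply,
      LinearMap.id_apply, piop_piop v hv, DLTop_DLTop hu, add_sub_cancel_left]

lemma DLTop_comp_Yinvop_comp_DLTop {u : ℝ} (hu : u ≠ 0) (v : ℝ) :
    DLTop u ∘ₗ Yinvop u v ∘ₗ DLTop u = Yop u v :=
  LinearMap.ext fun f => by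
    simp only [Yinvop, Yop, LinearMap.comp_apply, LinearMap.sub_apply, LinearMap.smul_apply,
      LinearMap.id_apply, map_sub, map_smul, DLTop_DLTop hu, add_sub_cancel_left]

theorem daha_braid_relations (u v : ℝ) (hu : u ≠ 0) (hv : 0 < v) :
    (Yinvop u v ∘ₗ Yop u v = LinearMap.id) ∧
    (DLTop u ∘ₗ Xop ∘ₗ DLTop u = Xinvop) ∧
    (DLTop u ∘ₗ Yinvop u v ∘ₗ DLTop u = Yop u v) :=
  ⟨Yinvop_comp_Yop hu hv.ne', DLTop_comp_Xop_comp_DLTop hu, DLTop_comp_Yinvop_comp_DLTop hu v⟩
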